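/- With μ = (μ_1, μ_2), in Y_μ((u^{-1}, v^{-1})): (u-v)[D_{1;i,j}(u), F_{1;h,k}(v)] = (-1)^{|i|_1|j|_1 + |h|_2|i|_1 + |h|_2|j|_1} δ_{i,k} Σ_{p=1}^{μ_1} (F_{1;h,p}(u) - F_{1;h,p}(v)) D_{1;p,j}(u), for 1 ≤ i,j ≤ μ_1, 1 ≤ h ≤ μ_2, 1 ≤ k ≤ μ_1. -/

import Mathlib

/-!
Work in `A⟦u⁻¹⟧⟦v⁻¹⟧`, where `(u - v) Z = W` becomes `(v⁻¹ - u⁻¹) Z = u⁻¹ v⁻¹ W` with central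
multipliers. Fix `a = D_{ij}(u)` of parity `α`. With `S` the diagonal matrix of signs
`(-1)^(α |q|)`, the map `ad M = a M - S M S a` computes entrywise supercommutators with `a`, and it
is a twisted derivation: `ad (M N) = ad M · N + S M S · ad N`. From `F = T₂₁ D⁻¹` this gives
`ad F = ad T₂₁ · D⁻¹ - S F S · ad D · D⁻¹`, and the RTT relation reads
`(u - v) ad T_{ρκ} = ± S (T_{ρκ}(u) E_{ji} D(v) - T_{ρκ}(v) E_{ji} D(u))` for `T_{ρκ} = D` and
`T_{ρκ} = T₂₁ = F D`. Substituting, the terms with `D(u) D(v)⁻¹` cancel and `D(v) D(v)⁻¹ = 1`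
leaves `± S (F(u) - F(v)) D(u) E_{ji}`, whose `(h, k)` entry is the claim.
-/

/-- The supercommutator `[x,y] = x·y - (-1)^ε · y·x`, `ε` being the product of parities. -/
def sbr {A : Type*} [Ring A] (ε : ℕ) (x y : A) : A := x * y - (-1 : A) ^ ε * (y * x)

/-- Coefficient of `u^{-r}` in the product of the series with coefficients `f` and `g`. -/
def conv {A : Type*} [Ring A] (f g : ℕ → A) (r : ℕ) : A :=
  ∑ x ∈ Finset.HasAntidiagonal.antidiagonal r, f x.1 * g x.2

section

variable {A : Type*} [Ring A] (μ1 μ2 : ℕ) (par : Fin (μ1 + μ2) → ℕ)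
  (t : Fin (μ1 + μ2) → Fin (μ1 + μ2) → ℕ → A)
  (D1 D1' : Fin μ1 → Fin μ1 → ℕ → A) (D2 D2' : Fin μ2 → Fin μ2 → ℕ → A)
  (E1 : Fin μ1 → Fin μ2 → ℕ → A) (F1 : Fin μ2 → Fin μ1 → ℕ → A)

/-- The restricted parity `|i|_1` for `1 ≤ i ≤ μ1`. -/
def p1 (i : Fin μ1) : ℕ := par (Fin.castAdd μ2 i)

/-- The restricted parity `|i|_2` for `1 ≤ i ≤ μ2`. -/
def p2 (i : Fin μ2) : ℕ := par (Fin.natAdd μ1 i)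

/-- The hypotheses on the data: `t` satisfies the series-form RTT relations of the super
Yangian `Y_{M|N}` with `t_{i,j}^{(0)} = δ_{ij}`, and `D_1, D_2, E_1, F_1` (with the
inverses `D_1', D_2'` of `D_1, D_2`) constitute the Gauss decomposition
`T(u) = F(u) D(u) E(u)` relative to the composition `μ = (μ1, μ2)`, i.e. (coefficientwise)
`T_{1,1} = D_1`, `T_{1,2} = D_1 E_1`, `T_{2,1} = F_1 D_1`,
`T_{2,2} = F_1 D_1 E_1 + D_2`. -/
structure GaussData2 : Prop where
  h0 : ∀ i j, t i j 0 = if i = j then 1 else 0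
  hrtt : ∀ i j l m : Fin (μ1 + μ2), ∀ r s : ℕ,
    sbr ((par i + par j) * (par l + par m)) (t i j (r + 1)) (t l m s)
        - sbr ((par i + par j) * (par l + par m)) (t i j r) (t l m (s + 1))
      = (-1 : A) ^ (par i * par j + par i * par l + par j * par l) *
          (t l j r * t i m s - t l j s * t i m r)
  hE0 : ∀ i j, E1 i j 0 = 0
  hF0 : ∀ i j, F1 i j 0 = 0
  hD1inv : ∀ i j r, ∑ p : Fin μ1, conv (D1 i p) (D1' p j) r
    = if i = j ∧ r = 0 then 1 else 0
  hD1inv' : ∀ i j r, ∑ p : Fin μ1, conv (D1' i p) (D1 p j) r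
    = if i = j ∧ r = 0 then 1 else 0
  hD2inv : ∀ i j r, ∑ p : Fin μ2, conv (D2 i p) (D2' p j) r
    = if i = j ∧ r = 0 then 1 else 0
  hD2inv' : ∀ i j r, ∑ p : Fin μ2, conv (D2' i p) (D2 p j) r
    = if i = j ∧ r = 0 then 1 else 0
  hT11 : ∀ i j r, t (Fin.castAdd μ2 i) (Fin.castAdd μ2 j) r = D1 i j r
  hT12 : ∀ i j r, t (Fin.castAdd μ2 i) (Fin.natAdd μ1 j) r
    = ∑ p : Fin μ1, conv (D1 i p) (E1 p j) r
  hT21 : ∀ i j r, t (Fin.natAdd μ1 i) (Fin.castAdd μ2 j) r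
    = ∑ p : Fin μ1, conv (F1 i p) (D1 p j) r
  hT22 : ∀ i j r, t (Fin.natAdd μ1 i) (Fin.natAdd μ1 j) r
    = (∑ p : Fin μ1, ∑ q : Fin μ1, conv (F1 i p) (conv (D1 p q) (E1 q j)) r)
      + D2 i j r

end

namespace SuperYangian

section SuperAd

open Matrix

variable {R : Type*} [Ring R] {l m n : Type*} [Fintype n] [DecidableEq n]

theorem mul_single_mul_apply (M : Matrix l n R) (N : Matrix n m R) (i j : n) (c : R) (a : l)
    (b : m) : (M * (single j i c : Matrix n n R) * N) a b = M a j * c * N i b := by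
  simp [Matrix.mul_apply, Matrix.single_apply, ite_and]

theorem mul_single_one_apply (M : Matrix l n R) (i j : n) (a : l) (b : n) :
    (M * (single j i 1 : Matrix n n R)) a b = if i = b then M a j else 0 := by
  by_cases hib : i = b <;> simp [Matrix.mul_apply, Matrix.single_apply, hib]

variable [Fintype m] [DecidableEq m]

/-- For the sign matrices `signDiag`, this is the matrix of supercommutators `[a, M_{qk}]`
(`superAd_signDiag_apply`). -/
def superAd (a : R) (Sm : Matrix m m R) (Sn : Matrix n n R) (M : Matrix m n R) : Matrix m n R :=
  scalar m a * M - Sm * M * Sn * scalar n a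

theorem superAd_mul [Fintype l] [DecidableEq l] (a : R) (Sl : Matrix l l R) (Sm : Matrix m m R)
    (Sn : Matrix n n R) (hS : Sm * Sm = 1) (M : Matrix l m R) (N : Matrix m n R) :
    superAd a Sl Sn (M * N) = superAd a Sl Sm M * N + Sl * M * Sm * superAd a Sm Sn N := by
  have hS' : ∀ X : Matrix m n R, Sm * (Sm * X) = X := fun X => by
    rw [← Matrix.mul_assoc, hS, Matrix.one_mul]
  simp only [superAd, Matrix.mul_sub, Matrix.sub_mul, Matrix.mul_assoc, hS']
  abel

theorem superAd_one (a : R) {S : Matrix n n R} (hS : S * S = 1) : superAd a S S 1 = 0 := by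
  rw [superAd, Matrix.mul_one, Matrix.mul_one, hS, Matrix.one_mul, sub_self]

theorem superAd_of_mul_eq_one (a : R) {S : Matrix n n R} (hS : S * S = 1)
    {D D' : Matrix n n R} (hDD' : D * D' = 1) (hD'D : D' * D = 1) :
    superAd a S S D' = -(S * D' * S * superAd a S S D * D') := by
  have h := superAd_mul a S S S hS D D'
  rw [hDD', superAd_one a hS] at h
  have hinv : S * D' * S * (S * D * S) = 1 := by
    simp only [Matrix.mul_assoc]
    rw [← Matrix.mul_assoc S S, hS, Matrix.one_mul, ← Matrix.mul_assoc D', hD'D, Matrix.one_mul,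
      hS]
  calc superAd a S S D'
      = S * D' * S * (S * D * S) * superAd a S S D' := by rw [hinv, Matrix.one_mul]
    _ = S * D' * S * (superAd a S S D * D' + S * D * S * superAd a S S D')
          - S * D' * S * superAd a S S D * D' := by
        simp only [Matrix.mul_add, Matrix.mul_assoc]; abel
    _ = -(S * D' * S * superAd a S S D * D') := by rw [← h, Matrix.mul_zero, zero_sub]

def signDiag (α : ℕ) (p : n → ℕ) : Matrix n n R := diagonal fun q => (-1 : R) ^ (α * p q)

theorem signDiag_mul_self (α : ℕ) (p : n → ℕ) :
    (signDiag α p : Matrix n n R) * signDiag α p = 1 := by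
  rw [signDiag, diagonal_mul_diagonal, ← diagonal_one]
  exact congrArg diagonal (funext fun q => by rw [← pow_add, Even.neg_one_pow ⟨_, rfl⟩])

theorem superAd_signDiag_apply (a : R) (α : ℕ) (pm : m → ℕ) (pn : n → ℕ) (M : Matrix m n R)
    (q : m) (k : n) :
    superAd a (signDiag α pm) (signDiag α pn) M q k = sbr (α * (pm q + pn k)) a (M q k) := by
  rw [superAd, Matrix.sub_apply, signDiag, signDiag, scalar_apply, scalar_apply, diagonal_mul,
    mul_diagonal, mul_diagonal, diagonal_mul, sbr, mul_add, pow_add]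
  have hs : Commute ((-1 : R) ^ (α * pn k)) (M q k) := (Commute.neg_one_left _).pow_left _
  rw [← mul_assoc, mul_assoc _ (M q k), ← hs.eq, ← mul_assoc]

/-- In the application `z = v⁻¹ - u⁻¹`, `c = ± u⁻¹ v⁻¹`, `P = E_{ji}`, `D = D(v)`, `Du = D(u)`,
`Fv = F(v)` and `Fu = F(u)`. -/
theorem smul_superAd_eq_of_rtt (a : R) (z c : Subring.center R) {Sm : Matrix m m R}
    {Sn : Matrix n n R} (hSn : Sn * Sn = 1) {D D' Du P : Matrix n n R} (hDD' : D * D' = 1)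
    (hD'D : D' * D = 1) {Fu Fv : Matrix m n R}
    (hD : z • superAd a Sn Sn D = c • (Sn * (Du * P * D - D * P * Du)))
    (hT : z • superAd a Sm Sn (Fv * D) = c • (Sm * (Fu * Du * P * D - Fv * D * P * Du))) :
    z • superAd a Sm Sn Fv = c • (Sm * ((Fu - Fv) * Du * P)) := by
  have hSn' : ∀ X : Matrix n n R, Sn * (Sn * X) = X := fun X => by
    rw [← Matrix.mul_assoc, hSn, Matrix.one_mul]
  have hDD'' : ∀ X : Matrix n n R, D * (D' * X) = X := fun X => by
    rw [← Matrix.mul_assoc, hDD', Matrix.one_mul]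
  have hF : superAd a Sm Sn Fv
      = superAd a Sm Sn (Fv * D) * D' - Sm * Fv * Sn * superAd a Sn Sn D * D' := by
    conv_lhs => rw [← Matrix.mul_one Fv, ← hDD', ← Matrix.mul_assoc]
    rw [superAd_mul a Sm Sn Sn hSn, superAd_of_mul_eq_one a hSn hDD' hD'D]
    simp only [Matrix.mul_neg, Matrix.mul_assoc, hSn', hDD'', sub_eq_add_neg]
  rw [hF, smul_sub, ← Matrix.smul_mul, Matrix.mul_assoc _ _ D', ← Matrix.mul_smul,
    ← Matrix.smul_mul, hT, hD, Matrix.smul_mul, Matrix.smul_mul, Matrix.mul_smul, ← smul_sub]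
  congr 1
  simp only [Matrix.mul_sub, Matrix.sub_mul, Matrix.mul_assoc, hDD', hSn', Matrix.mul_one]
  abel

end SuperAd

theorem sbr_one_left {R : Type*} [Ring R] {e : ℕ} (he : Even e) (y : R) : sbr e 1 y = 0 := by
  rw [sbr, he.neg_one_pow, one_mul, mul_one, one_mul, sub_self]

theorem sbr_one_right {R : Type*} [Ring R] {e : ℕ} (he : Even e) (x : R) : sbr e x 1 = 0 := by
  rw [sbr, he.neg_one_pow, one_mul, mul_one, one_mul, sub_self]

section Series

open PowerSeries

variable {A : Type*} [Ring A] {m n : Type*}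

/-- The coefficient of `u^{-r} v^{-s}`: the inner variable of `A⟦X⟧⟦X⟧` stands for `u⁻¹` and the
outer one for `v⁻¹`, so a series in `u` is `C f` and a series in `v` is `map C g`. -/
noncomputable def coeff₂ (r s : ℕ) : A⟦X⟧⟦X⟧ →+ A :=
  (coeff r).toAddMonoidHom.comp (coeff s).toAddMonoidHom

theorem coeff₂_apply (r s : ℕ) (Z : A⟦X⟧⟦X⟧) : coeff₂ r s Z = coeff r (coeff s Z) := rfl

theorem coeff₂_ext {Z Z' : A⟦X⟧⟦X⟧} (h : ∀ r s, coeff₂ r s Z = coeff₂ r s Z') : Z = Z' :=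
  PowerSeries.ext fun s => PowerSeries.ext fun r => h r s

theorem coeff₂_C (r s : ℕ) (f : A⟦X⟧) : coeff₂ r s (C f) = if s = 0 then coeff r f else 0 := by
  rw [coeff₂_apply, coeff_C]
  split_ifs <;> simp

theorem coeff₂_C_mul_map_C (r s : ℕ) (f g : A⟦X⟧) :
    coeff₂ r s (C f * map C g) = coeff r f * coeff s g := by
  rw [coeff₂_apply, coeff_C_mul, coeff_map, coeff_mul_C]

theorem coeff₂_map_C_mul_C (r s : ℕ) (f g : A⟦X⟧) :
    coeff₂ r s (map C g * C f) = coeff s g * coeff r f := by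
  rw [coeff₂_apply, coeff_mul_C, coeff_map, coeff_C_mul]

theorem coeff₂_neg_one_pow_mul (r s e : ℕ) (Z : A⟦X⟧⟦X⟧) :
    coeff₂ r s ((-1) ^ e * Z) = (-1) ^ e * coeff₂ r s Z := by
  rw [show ((-1 : A⟦X⟧⟦X⟧) ^ e) = C (C ((-1) ^ e)) by simp, coeff₂_apply, coeff_C_mul,
    coeff_C_mul]
  rfl

theorem coeff₂_sbr_C_map_C (r s e : ℕ) (f g : A⟦X⟧) :
    coeff₂ r s (sbr e (C f) (map C g)) = sbr e (coeff r f) (coeff s g) := by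
  rw [sbr, map_sub, coeff₂_neg_one_pow_mul, coeff₂_C_mul_map_C, coeff₂_map_C_mul_C, sbr]

@[simp] theorem coeff₂_X_mul_succ (r s : ℕ) (Z : A⟦X⟧⟦X⟧) :
    coeff₂ r (s + 1) (X * Z) = coeff₂ r s Z := by
  rw [coeff₂_apply, coeff_succ_X_mul, coeff₂_apply]

@[simp] theorem coeff₂_X_mul_zero (r : ℕ) (Z : A⟦X⟧⟦X⟧) : coeff₂ r 0 (X * Z) = 0 := by
  rw [coeff₂_apply, coeff_zero_X_mul, map_zero]

@[simp] theorem coeff₂_C_X_mul_succ (r s : ℕ) (Z : A⟦X⟧⟦X⟧) :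
    coeff₂ (r + 1) s (C X * Z) = coeff₂ r s Z := by
  rw [coeff₂_apply, coeff_C_mul, coeff_succ_X_mul, coeff₂_apply]

@[simp] theorem coeff₂_C_X_mul_zero (s : ℕ) (Z : A⟦X⟧⟦X⟧) : coeff₂ 0 s (C X * Z) = 0 := by
  rw [coeff₂_apply, coeff_C_mul, coeff_zero_X_mul]

/-- `(u - v) Z = W` means `(v⁻¹ - u⁻¹) Z = u⁻¹ v⁻¹ W`, as long as `Z` has no terms of degree zero
in `u⁻¹` or in `v⁻¹`. -/
theorem sub_mul_eq_mul_iff (Z W : A⟦X⟧⟦X⟧) :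
    (X - C X) * Z = C X * X * W ↔
      (∀ s, coeff₂ 0 s Z = 0) ∧ (∀ r, coeff₂ r 0 Z = 0) ∧
        ∀ r s, coeff₂ (r + 1) s Z - coeff₂ r (s + 1) Z = coeff₂ r s W := by
  rw [sub_mul, mul_assoc]
  constructor
  · intro h
    have h' := fun r s => congrArg (coeff₂ r s) h
    refine ⟨fun s => ?_, fun r => ?_, fun r s => ?_⟩
    · simpa using h' 0 (s + 1)
    · simpa using h' (r + 1) 0
    · simpa using h' (r + 1) (s + 1)
  · rintro ⟨h0, h0', h⟩
    refine coeff₂_ext fun r s => ?_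
    rcases r with _ | r <;> rcases s with _ | s <;> simp [h0, h0', h]

theorem C_X_mem_center : (C (X : A⟦X⟧) : A⟦X⟧⟦X⟧) ∈ Subring.center A⟦X⟧⟦X⟧ :=
  Subring.mem_center_iff.2 fun Z => PowerSeries.ext fun s => by
    rw [coeff_mul_C, coeff_C_mul, ← (commute_X _).eq]

theorem X_mem_center {R : Type*} [Ring R] : (X : R⟦X⟧) ∈ Subring.center R⟦X⟧ :=
  Subring.mem_center_iff.2 fun Z => (commute_X Z).eq

noncomputable def xU : Subring.center A⟦X⟧⟦X⟧ := ⟨C X, C_X_mem_center⟩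

noncomputable def xV : Subring.center A⟦X⟧⟦X⟧ := ⟨X, X_mem_center⟩

@[simp] theorem coe_xU : ((xU : Subring.center A⟦X⟧⟦X⟧) : A⟦X⟧⟦X⟧) = C X := rfl

@[simp] theorem coe_xV : ((xV : Subring.center A⟦X⟧⟦X⟧) : A⟦X⟧⟦X⟧) = X := rfl

theorem mk_mul_mk (f g : ℕ → A) : mk f * mk g = mk (conv f g) := by
  ext r
  rw [coeff_mul, coeff_mk]
  simp only [coeff_mk, conv]

theorem coeff₂_sub_mul_C (r s : ℕ) (f g : ℕ → A) :
    coeff₂ r s ((C (mk f) - map C (mk f)) * C (mk g))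
      = (if s = 0 then conv f g r else 0) - f s * g r := by
  rw [sub_mul, map_sub, ← map_mul, mk_mul_mk, coeff₂_C, coeff₂_map_C_mul_C, coeff_mk, coeff_mk,
    coeff_mk]

def seriesMatrix {m n : Type*} (f : m → n → ℕ → A) : Matrix m n A⟦X⟧ :=
  Matrix.of fun a b => mk (f a b)

theorem seriesMatrix_mul {l : Type*} [Fintype n] (f : l → n → ℕ → A) (g : n → m → ℕ → A) :
    seriesMatrix f * seriesMatrix g = seriesMatrix fun a b r => ∑ p, conv (f a p) (g p b) r := by
  ext a b r
  simp [seriesMatrix, Matrix.mul_apply, mk_mul_mk, map_sum]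

theorem seriesMatrix_eq_one [DecidableEq n] {f : n → n → ℕ → A}
    (h : ∀ a b r, f a b r = if a = b ∧ r = 0 then 1 else 0) : seriesMatrix f = 1 := by
  ext a b r
  by_cases hab : a = b <;> simp [seriesMatrix, h, hab, coeff_one, Matrix.one_apply]

theorem sbr_sub_sbr_of_smul_superAd_eq [Fintype m] [Fintype n] [DecidableEq m] [DecidableEq n]
    {f : ℕ → A} {F : m → n → ℕ → A} {D : n → n → ℕ → A} {α e : ℕ} {pm : m → ℕ} {pn : n → ℕ}
    {i j : n}
    (hkey : (xV - xU : Subring.center A⟦X⟧⟦X⟧) • superAd (C (mk f)) (signDiag α pm)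
        (signDiag α pn) ((seriesMatrix F).map (map C))
      = (xU * xV * (-1) ^ e : Subring.center A⟦X⟧⟦X⟧) • ((signDiag α pm : Matrix m m A⟦X⟧⟦X⟧) *
          (((seriesMatrix F).map C - (seriesMatrix F).map (map C)) * (seriesMatrix D).map C *
            (Matrix.single j i 1 : Matrix n n A⟦X⟧⟦X⟧))))
    (h : m) (k : n) (r s : ℕ) :
    sbr (α * (pm h + pn k)) (f (r + 1)) (F h k s) - sbr (α * (pm h + pn k)) (f r) (F h k (s + 1))
      = (-1) ^ (e + α * pm h) * (if i = k then
          ∑ p, ((if s = 0 then conv (F h p) (D p j) r else 0) - F h p s * D p j r) else 0) := by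
  have hentry := congrFun (congrFun hkey h) k
  rw [Matrix.smul_apply, Matrix.smul_apply, superAd_signDiag_apply, signDiag, Matrix.diagonal_mul,
    mul_single_one_apply] at hentry
  have hrel : (X - C X) * sbr (α * (pm h + pn k)) (C (mk f)) (map C (mk (F h k)))
      = C X * X * ((-1) ^ (e + α * pm h) *
          (if i = k then ∑ p, (C (mk (F h p)) - map C (mk (F h p))) * C (mk (D p j)) else 0)) := by
    simpa [Subring.smul_def, pow_add, mul_assoc, Matrix.mul_apply, seriesMatrix] using hentry
  have hcoeff := ((sub_mul_eq_mul_iff _ _).1 hrel).2.2 r s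
  rw [coeff₂_sbr_C_map_C, coeff₂_sbr_C_map_C, coeff₂_neg_one_pow_mul] at hcoeff
  simp only [coeff_mk] at hcoeff
  rw [hcoeff]
  by_cases hik : i = k
  · rw [if_pos hik, if_pos hik, map_sum]
    exact congrArg _ (Finset.sum_congr rfl fun p _ => coeff₂_sub_mul_C r s _ _)
  · rw [if_neg hik, if_neg hik, map_zero]

end Series

section Generators

open PowerSeries

variable {A ι : Type*} [Ring A] [DecidableEq ι]

structure IsSuperYangianGenerators (par : ι → ℕ) (t : ι → ι → ℕ → A) : Prop where
  zero : ∀ i j, t i j 0 = if i = j then 1 else 0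
  rtt : ∀ i j l m : ι, ∀ r s : ℕ,
    sbr ((par i + par j) * (par l + par m)) (t i j (r + 1)) (t l m s)
        - sbr ((par i + par j) * (par l + par m)) (t i j r) (t l m (s + 1))
      = (-1 : A) ^ (par i * par j + par i * par l + par j * par l) *
          (t l j r * t i m s - t l j s * t i m r)

variable {par : ι → ℕ} {t : ι → ι → ℕ → A}

theorem IsSuperYangianGenerators.sub_mul_sbr (ht : IsSuperYangianGenerators par t)
    (i j l m : ι) :
    (X - C X) * sbr ((par i + par j) * (par l + par m)) (C (PowerSeries.mk (t i j)))
        (map C (PowerSeries.mk (t l m)))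
      = C X * X * ((-1) ^ (par i * par j + par i * par l + par j * par l) *
          (C (PowerSeries.mk (t l j)) * map C (PowerSeries.mk (t i m))
            - map C (PowerSeries.mk (t l j)) * C (PowerSeries.mk (t i m)))) := by
  refine (sub_mul_eq_mul_iff _ _).2 ⟨fun s => ?_, fun r => ?_, fun r s => ?_⟩
  · rw [coeff₂_sbr_C_map_C, coeff_mk, ht.zero]
    split_ifs with hij
    · subst hij
      exact sbr_one_left (Even.mul_right ⟨_, rfl⟩ _) _
    · rw [sbr, zero_mul, mul_zero, mul_zero, sub_zero]
  · rw [coeff₂_sbr_C_map_C, coeff_mk, coeff_mk, ht.zero]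
    split_ifs with hlm
    · subst hlm
      exact sbr_one_right (Even.mul_left ⟨_, rfl⟩ _) _
    · rw [sbr, zero_mul, mul_zero, mul_zero, sub_self]
  · simp only [coeff₂_sbr_C_map_C, coeff₂_neg_one_pow_mul, map_sub, coeff₂_C_mul_map_C,
      coeff₂_map_C_mul_C, coeff_mk]
    exact ht.rtt i j l m r s

/-- The RTT relation on the block `T_{ρκ}` of `T`, for `i, j ∈ κ`:
`(u - v) [T_{κi,κj}(u), T_{ρκ}(v)] = ± S (T_{ρκ}(u) E_{ji} T_{κκ}(v) - T_{ρκ}(v) E_{ji} T_{κκ}(u))`.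
-/
theorem IsSuperYangianGenerators.smul_superAd_submatrix (ht : IsSuperYangianGenerators par t)
    {m n : Type*} [Fintype m] [Fintype n] [DecidableEq m] [DecidableEq n]
    (ρ : m → ι) (κ : n → ι) (i j : n) :
    (xV - xU : Subring.center A⟦X⟧⟦X⟧) • superAd (C (PowerSeries.mk (t (κ i) (κ j))))
        (signDiag (par (κ i) + par (κ j)) (par ∘ ρ)) (signDiag (par (κ i) + par (κ j)) (par ∘ κ))
        (((seriesMatrix t).submatrix ρ κ).map (map C))
      = (xU * xV * (-1) ^ (par (κ i) * par (κ j)) : Subring.center A⟦X⟧⟦X⟧) •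
          ((signDiag (par (κ i) + par (κ j)) (par ∘ ρ) : Matrix m m A⟦X⟧⟦X⟧) *
            (((seriesMatrix t).submatrix ρ κ).map C * Matrix.single j i (1 : A⟦X⟧⟦X⟧)
                * ((seriesMatrix t).submatrix κ κ).map (map C)
              - ((seriesMatrix t).submatrix ρ κ).map (map C) * Matrix.single j i (1 : A⟦X⟧⟦X⟧)
                * ((seriesMatrix t).submatrix κ κ).map C)) := by
  refine Matrix.ext fun l q => ?_
  rw [Matrix.smul_apply, Matrix.smul_apply, superAd_signDiag_apply, signDiag, Matrix.diagonal_mul,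
    Matrix.sub_apply, mul_single_mul_apply, mul_single_mul_apply]
  simp only [Subring.smul_def, smul_eq_mul, Matrix.map_apply, Matrix.submatrix_apply, seriesMatrix,
    Matrix.of_apply, Function.comp_apply, mul_one]
  rw [AddSubgroupClass.coe_sub, coe_xV, coe_xU, ht.sub_mul_sbr,
    show par (κ i) * par (κ j) + par (κ i) * par (ρ l) + par (κ j) * par (ρ l)
      = par (κ i) * par (κ j) + (par (κ i) + par (κ j)) * par (ρ l) by ring, pow_add]
  simp only [Subring.coe_mul, coe_xU, coe_xV, SubmonoidClass.coe_pow, Subring.coe_neg,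
    Subring.coe_one, mul_assoc]

end Generators

end SuperYangian

open SuperYangian PowerSeries

/-- with `μ = (μ1, μ2)`, in `Y_μ((u^{-1}, v^{-1}))`:
`(u-v)[D_{1;i,j}(u), F_{1;h,k}(v)]
  = (-1)^{|i|_1|j|_1 + |h|_2|i|_1 + |h|_2|j|_1} δ_{i,k}
    Σ_{p=1}^{μ1} (F_{1;h,p}(u) - F_{1;h,p}(v)) D_{1;p,j}(u)`,
stated coefficientwise at `u^{-r} v^{-s}`. -/
theorem statement13 {A : Type*} [Ring A] (μ1 μ2 : ℕ) (par : Fin (μ1 + μ2) → ℕ)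
    (t : Fin (μ1 + μ2) → Fin (μ1 + μ2) → ℕ → A)
    (D1 D1' : Fin μ1 → Fin μ1 → ℕ → A) (D2 D2' : Fin μ2 → Fin μ2 → ℕ → A)
    (E1 : Fin μ1 → Fin μ2 → ℕ → A) (F1 : Fin μ2 → Fin μ1 → ℕ → A)
    (hG : GaussData2 μ1 μ2 par t D1 D1' D2 D2' E1 F1) :
    ∀ (i j : Fin μ1) (h : Fin μ2) (k : Fin μ1) (r s : ℕ),
      sbr ((p1 μ1 μ2 par i + p1 μ1 μ2 par j) * (p2 μ1 μ2 par h + p1 μ1 μ2 par k))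
          (D1 i j (r + 1)) (F1 h k s)
        - sbr ((p1 μ1 μ2 par i + p1 μ1 μ2 par j) * (p2 μ1 μ2 par h + p1 μ1 μ2 par k))
            (D1 i j r) (F1 h k (s + 1))
      = (-1 : A) ^ (p1 μ1 μ2 par i * p1 μ1 μ2 par j + p2 μ1 μ2 par h * p1 μ1 μ2 par i
            + p2 μ1 μ2 par h * p1 μ1 μ2 par j) *
          (if i = k then
            ∑ p : Fin μ1,
              ((if s = 0 then conv (F1 h p) (D1 p j) r else 0) - F1 h p s * D1 p j r)
          else 0) := by
  intro i j h k r s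
  have ht : IsSuperYangianGenerators par t := ⟨hG.h0, hG.hrtt⟩
  have hT11 : t (Fin.castAdd μ2 i) (Fin.castAdd μ2 j) = D1 i j := funext (hG.hT11 i j)
  have hD : (seriesMatrix t).submatrix (Fin.castAdd μ2) (Fin.castAdd μ2) = seriesMatrix D1 :=
    congrArg seriesMatrix (funext₃ hG.hT11)
  have hFD : (seriesMatrix t).submatrix (Fin.natAdd μ1) (Fin.castAdd μ2)
      = seriesMatrix F1 * seriesMatrix D1 := by
    rw [seriesMatrix_mul]
    exact congrArg seriesMatrix (funext₃ hG.hT21)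
  have hDD' : (seriesMatrix D1).map (map (C (R := A))) * (seriesMatrix D1').map (map C) = 1 := by
    rw [← Matrix.map_mul, seriesMatrix_mul, seriesMatrix_eq_one hG.hD1inv,
      Matrix.map_one _ (map_zero _) (map_one _)]
  have hD'D : (seriesMatrix D1').map (map (C (R := A))) * (seriesMatrix D1).map (map C) = 1 := by
    rw [← Matrix.map_mul, seriesMatrix_mul, seriesMatrix_eq_one hG.hD1inv',
      Matrix.map_one _ (map_zero _) (map_one _)]
  have hrttD := ht.smul_superAd_submatrix (Fin.castAdd μ2) (Fin.castAdd μ2) i j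
  have hrttT := ht.smul_superAd_submatrix (Fin.natAdd μ1) (Fin.castAdd μ2) i j
  rw [hD] at hrttD hrttT
  rw [hFD, Matrix.map_mul, Matrix.map_mul] at hrttT
  have key := smul_superAd_eq_of_rtt _ _ _ (signDiag_mul_self _ _) hDD' hD'D hrttD hrttT
  rw [hT11] at key
  rw [show p1 μ1 μ2 par i * p1 μ1 μ2 par j + p2 μ1 μ2 par h * p1 μ1 μ2 par i
      + p2 μ1 μ2 par h * p1 μ1 μ2 par j
      = p1 μ1 μ2 par i * p1 μ1 μ2 par j + (p1 μ1 μ2 par i + p1 μ1 μ2 par j) * p2 μ1 μ2 par h by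
    ring]
  exact sbr_sub_sbr_of_smul_superAd_eq key h k r s
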